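/- The PL-group ⟨P, L⟩ acts simply transitively on the six-element set Hex: for any two triads Y, Z ∈ Hex there is a unique element g ∈ ⟨P, L⟩ with g(Y) = Z. -/

import Mathlib

/-- Pitch classes: the integers mod 12. -/
abbrev PC := ZMod 12

/-- Ordered triples of pitch classes. -/
abbrev T3 := PC × PC × PC

/-- The set of consonant triads: major triads `⟨x, x+4, x+7⟩` and
minor triads `⟨x+7, x+3, x⟩`. -/
def Triads : Set T3 :=
  {t | (∃ x : PC, t = (x, x + 4, x + 7)) ∨ (∃ x : PC, t = (x + 7, x + 3, x))}

instance : DecidablePred (· ∈ Triads) := fun t =>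
  decidable_of_iff ((∃ x : PC, t = (x, x + 4, x + 7)) ∨ (∃ x : PC, t = (x + 7, x + 3, x)))
    Iff.rfl

/-- Transposition `T_n`, componentwise on triples. -/
def Tfun (n : PC) (t : T3) : T3 := (t.1 + n, t.2.1 + n, t.2.2 + n)

/-- Inversion `I_n`, componentwise on triples. -/
def Ifun (n : PC) (t : T3) : T3 := (-t.1 + n, -t.2.1 + n, -t.2.2 + n)

/-- The parallel transformation `P⟨x₁,x₂,x₃⟩ = I_{x₁+x₃}⟨x₁,x₂,x₃⟩`. -/
def Pfun (t : T3) : T3 := Ifun (t.1 + t.2.2) t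

/-- The leading-tone-exchange `L⟨x₁,x₂,x₃⟩ = I_{x₂+x₃}⟨x₁,x₂,x₃⟩`. -/
def Lfun (t : T3) : T3 := Ifun (t.2.1 + t.2.2) t

lemma Tfun_mem (n : PC) (t : T3) (h : t ∈ Triads) : Tfun n t ∈ Triads := by
  rcases h with ⟨x, rfl⟩ | ⟨x, rfl⟩
  · exact Or.inl ⟨x + n, by simp only [Tfun, Prod.mk.injEq]; exact ⟨by first | ring | trivial, by ring, by ring⟩⟩
  · exact Or.inr ⟨x + n, by simp only [Tfun, Prod.mk.injEq]; exact ⟨by ring, by ring, by first | ring | trivial⟩⟩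

lemma Ifun_mem (n : PC) (t : T3) (h : t ∈ Triads) : Ifun n t ∈ Triads := by
  rcases h with ⟨x, rfl⟩ | ⟨x, rfl⟩
  · exact Or.inr ⟨-x + n - 7,
      by simp only [Ifun, Prod.mk.injEq]; exact ⟨by ring, by ring, by ring⟩⟩
  · exact Or.inl ⟨-x + n - 7,
      by simp only [Ifun, Prod.mk.injEq]; exact ⟨by ring, by ring, by ring⟩⟩

lemma Pfun_mem (t : T3) (h : t ∈ Triads) : Pfun t ∈ Triads := by
  rcases h with ⟨x, rfl⟩ | ⟨x, rfl⟩
  · exact Or.inr ⟨x,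
      by simp only [Pfun, Ifun, Prod.mk.injEq]; exact ⟨by ring, by ring, by ring⟩⟩
  · exact Or.inl ⟨x,
      by simp only [Pfun, Ifun, Prod.mk.injEq]; exact ⟨by ring, by ring, by ring⟩⟩

lemma Lfun_mem (t : T3) (h : t ∈ Triads) : Lfun t ∈ Triads := by
  rcases h with ⟨x, rfl⟩ | ⟨x, rfl⟩
  · exact Or.inr ⟨x + 4,
      by simp only [Lfun, Ifun, Prod.mk.injEq]; exact ⟨by ring, by ring, by ring⟩⟩
  · exact Or.inl ⟨x - 4,
      by simp only [Lfun, Ifun, Prod.mk.injEq]; exact ⟨by ring, by ring, by ring⟩⟩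

lemma Tfun_neg (n : PC) (t : T3) : Tfun (-n) (Tfun n t) = t := by
  simp only [Tfun]; exact Prod.ext (by ring) (Prod.ext (by ring) (by ring))

lemma Ifun_invol (n : PC) (t : T3) : Ifun n (Ifun n t) = t := by
  simp only [Ifun]; exact Prod.ext (by ring) (Prod.ext (by ring) (by ring))

lemma Pfun_invol (t : T3) : Pfun (Pfun t) = t := by
  simp only [Pfun, Ifun]; exact Prod.ext (by ring) (Prod.ext (by ring) (by ring))

lemma Lfun_invol (t : T3) : Lfun (Lfun t) = t := by
  simp only [Lfun, Ifun]; exact Prod.ext (by ring) (Prod.ext (by ring) (by ring))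

/-- Transposition `T_n` as a bijection of the set of consonant triads. -/
def Tperm (n : PC) : Equiv.Perm ↥Triads where
  toFun t := ⟨Tfun n t, Tfun_mem n t t.2⟩
  invFun t := ⟨Tfun (-n) t, Tfun_mem (-n) t t.2⟩
  left_inv t := Subtype.ext (Tfun_neg n t)
  right_inv t := Subtype.ext (by simpa using Tfun_neg (-n) t)

/-- Inversion `I_n` as a bijection of the set of consonant triads. -/
def Iperm (n : PC) : Equiv.Perm ↥Triads :=
  Function.Involutive.toPerm (fun t => ⟨Ifun n t, Ifun_mem n t t.2⟩)
    (fun t => Subtype.ext (Ifun_invol n t))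

/-- `P` as a bijection of the set of consonant triads. -/
def Pperm : Equiv.Perm ↥Triads :=
  Function.Involutive.toPerm (fun t => ⟨Pfun t, Pfun_mem t t.2⟩)
    (fun t => Subtype.ext (Pfun_invol t))

/-- `L` as a bijection of the set of consonant triads. -/
def Lperm : Equiv.Perm ↥Triads :=
  Function.Involutive.toPerm (fun t => ⟨Lfun t, Lfun_mem t t.2⟩)
    (fun t => Subtype.ext (Lfun_invol t))

/-- The hexatonic cycle `Hex`: the six triads `E♭, e♭, B, b, G, g`. -/
def HexT : Set T3 :=
  {(3, 7, 10), (10, 6, 3), (11, 3, 6), (6, 2, 11), (7, 11, 2), (2, 10, 7)}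

/-- The hexatonic cycle as a set of elements of `Triads`. -/
def HexSub : Set ↥Triads := {t | (t : T3) ∈ HexT}

/-- The PL-group: the subgroup of `Sym(Triads)` generated by `P` and `L`. -/
def PLgroup : Subgroup (Equiv.Perm ↥Triads) := Subgroup.closure {Pperm, Lperm}

section PLproof

local notation "Pp" => Pperm
local notation "Lp" => Lperm

lemma coe_Pperm (t : ↥Triads) : ((Pperm t : ↥Triads) : T3) = Pfun ↑t := rfl
lemma coe_Lperm (t : ↥Triads) : ((Lperm t : ↥Triads) : T3) = Lfun ↑t := rfl

lemma hP2 : Pperm * Pperm = 1 :=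
  Equiv.ext fun t => Subtype.ext (Pfun_invol (t : T3))

lemma hL2 : Lperm * Lperm = 1 :=
  Equiv.ext fun t => Subtype.ext (Lfun_invol (t : T3))

lemma h12 : (12 : PC) = 0 := by decide

lemma hbr : Lperm * (Pperm * Lperm) = Pperm * (Lperm * Pperm) := by
  apply Equiv.ext; intro t; apply Subtype.ext
  show Lfun (Pfun (Lfun ↑t)) = Pfun (Lfun (Pfun ↑t))
  rcases t.2 with ⟨x, hx⟩ | ⟨x, hx⟩ <;> rw [hx] <;>
    simp only [Pfun, Lfun, Ifun, Prod.mk.injEq] <;>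
    refine ⟨?_, ?_, ?_⟩ <;>
    first
      | linear_combination (0 : PC) * h12
      | linear_combination h12
      | linear_combination -h12
      | linear_combination 2 * h12
      | linear_combination -2 * h12
      | linear_combination 3 * h12
      | linear_combination -3 * h12

lemma hP2g (g : Equiv.Perm ↥Triads) : Pperm * (Pperm * g) = g := by
  rw [← mul_assoc, hP2, one_mul]

lemma hL2g (g : Equiv.Perm ↥Triads) : Lperm * (Lperm * g) = g := by
  rw [← mul_assoc, hL2, one_mul]

lemma hbrg (g : Equiv.Perm ↥Triads) :
    Lperm * (Pperm * (Lperm * g)) = Pperm * (Lperm * (Pperm * g)) := by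
  simpa [mul_assoc] using congrArg (· * g) hbr

lemma hPinv : Pperm⁻¹ = Pperm := inv_eq_of_mul_eq_one_right hP2
lemma hLinv : Lperm⁻¹ = Lperm := inv_eq_of_mul_eq_one_right hL2

/-- Every element of the PL-group is one of the six listed elements. -/
lemma mem_PLgroup_cases (g : Equiv.Perm ↥Triads) (hg : g ∈ PLgroup) :
    g = 1 ∨ g = Pperm ∨ g = Lperm ∨ g = Pperm * Lperm ∨ g = Lperm * Pperm ∨
      g = Pperm * (Lperm * Pperm) := by
  induction hg using Subgroup.closure_induction with
  | mem x hx =>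
    rcases hx with rfl | rfl
    · exact Or.inr (Or.inl rfl)
    · exact Or.inr (Or.inr (Or.inl rfl))
  | one => exact Or.inl rfl
  | mul a b ha hb iha ihb =>
    clear ha hb
    rcases iha with rfl | rfl | rfl | rfl | rfl | rfl <;>
      rcases ihb with rfl | rfl | rfl | rfl | rfl | rfl <;>
      simp [mul_assoc, hP2, hL2, hP2g, hL2g, hbr, hbrg]
  | inv a ha iha =>
    clear ha
    rcases iha with rfl | rfl | rfl | rfl | rfl | rfl <;>
      simp [mul_inv_rev, hPinv, hLinv, mul_assoc, hP2, hL2, hP2g, hL2g, hbr, hbrg]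

lemma P_mem : Pperm ∈ PLgroup := Subgroup.subset_closure (Or.inl rfl)
lemma L_mem : Lperm ∈ PLgroup := Subgroup.subset_closure (Or.inr rfl)

/-- Any element of the PL-group fixing a point of the hexatonic cycle is the identity. -/
lemma stab_trivial (g : Equiv.Perm ↥Triads) (hg : g ∈ PLgroup) (Y : ↥Triads)
    (hY : Y ∈ HexSub) (h : g Y = Y) : g = 1 := by
  have hv := congrArg (Subtype.val) h
  simp only [HexSub, HexT, Set.mem_insert_iff, Set.mem_singleton_iff, Set.mem_setOf_eq] at hY
  rcases mem_PLgroup_cases g hg with rfl | rfl | rfl | rfl | rfl | rfl <;>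
    [skip;
     skip;
     skip;
     skip;
     skip;
     skip] <;>
  first
    | rfl
    | (rcases hY with hy | hy | hy | hy | hy | hy <;>
        simp only [Equiv.Perm.mul_apply, coe_Pperm, coe_Lperm, hy] at hv <;>
        exact absurd hv (by decide))

/-- Every element of the hexatonic cycle can be moved to the base point `(3,7,10)`. -/
lemma to_base (Y : ↥Triads) (hY : Y ∈ HexSub) :
    ∃ g ∈ PLgroup, ((g Y : ↥Triads) : T3) = ((3 : PC), (7 : PC), (10 : PC)) := by
  simp only [HexSub, HexT, Set.mem_insert_iff, Set.mem_singleton_iff, Set.mem_setOf_eq] at hY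
  rcases hY with hy | hy | hy | hy | hy | hy
  · exact ⟨1, one_mem _, by simpa using hy⟩
  · exact ⟨Pperm, P_mem, by
      simp only [coe_Pperm, hy]; decide⟩
  · exact ⟨Pperm * Lperm, mul_mem P_mem L_mem, by
      simp only [Equiv.Perm.mul_apply, coe_Pperm, coe_Lperm, hy]; decide⟩
  · exact ⟨Pperm * (Lperm * Pperm), mul_mem P_mem (mul_mem L_mem P_mem), by
      simp only [Equiv.Perm.mul_apply, coe_Pperm, coe_Lperm, hy]; decide⟩
  · exact ⟨Lperm * Pperm, mul_mem L_mem P_mem, by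
      simp only [Equiv.Perm.mul_apply, coe_Pperm, coe_Lperm, hy]; decide⟩
  · exact ⟨Lperm, L_mem, by
      simp only [coe_Lperm, hy]; decide⟩

end PLproof

/-- The PL-group `⟨P, L⟩` acts simply transitively on the six-element set `Hex`:
for any two triads `Y, Z ∈ Hex` there is a unique `g ∈ ⟨P, L⟩` with `g(Y) = Z`. -/
theorem PLgroup_simply_transitive_on_Hex (Y Z : ↥Triads)
    (hY : Y ∈ HexSub) (hZ : Z ∈ HexSub) :
    ∃! g : Equiv.Perm ↥Triads, g ∈ PLgroup ∧ g Y = Z := by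
  obtain ⟨gY, hgY, hgYv⟩ := to_base Y hY
  obtain ⟨gZ, hgZ, hgZv⟩ := to_base Z hZ
  have hbase : gY Y = gZ Z := Subtype.ext (hgYv.trans hgZv.symm)
  refine ⟨gZ⁻¹ * gY, ⟨mul_mem (inv_mem hgZ) hgY, ?_⟩, ?_⟩
  · show gZ⁻¹ (gY Y) = Z
    rw [hbase]
    exact gZ.symm_apply_apply Z
  · rintro g ⟨hg, hgv⟩
    have hg' : (gZ⁻¹ * gY)⁻¹ * g ∈ PLgroup :=
      mul_mem (inv_mem (mul_mem (inv_mem hgZ) hgY)) hg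
    have hfix : ((gZ⁻¹ * gY)⁻¹ * g) Y = Y := by
      show (gZ⁻¹ * gY)⁻¹ (g Y) = Y
      rw [hgv]
      apply (gZ⁻¹ * gY).injective
      show (gZ⁻¹ * gY) ((gZ⁻¹ * gY)⁻¹ Z) = (gZ⁻¹ * gY) Y
      rw [show ∀ (f : Equiv.Perm ↥Triads) (x : ↥Triads), f (f⁻¹ x) = x from fun f x => f.apply_symm_apply x]
      show Z = gZ⁻¹ (gY Y)
      rw [hbase]
      exact (gZ.symm_apply_apply Z).symm
    have := stab_trivial _ hg' Y hY hfix
    rw [inv_mul_eq_one] at this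
    exact this.symm
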